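/- Let μ denote the Möbius function, and let k ≥ 2 be an integer. Suppose that for every ε > 0 there exists a constant C_ε > 0 such that |Σ_{1 ≤ n ≤ x} μ(n)e^{2πi n^k t}| ≤ C_ε·x^{1 − 2^{1−2k} + ε} for all real x ≥ 1 and all t ∈ ℝ (this estimate holds under the Generalized Riemann Hypothesis). Then the Hausdorff dimensions of the graphs {(t, |F_{k,k}(μ;t)|) : t ∈ [0,1]}, {(t, Re F_{k,k}(μ;t)) : t ∈ [0,1]}, and {(t, Im F_{k,k}(μ;t)) : t ∈ [0,1]} in ℝ² are each at most 1 + (1 − 2^{1−2k})/k. -/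

import Mathlib

/-!
Partial summation turns the bound `‖∑_{n ≤ N} μ(n) e(n^k t)‖ ≪ N^σ`, `σ = 1 - 2^{1-2k} + ε`,
into a Hölder bound for `F`. Split `F t - F s` at `N ≈ |t - s|^{-1/k}`: summing the tails by parts
against `n^{-k}` gives `O(N^{σ-k})`, and summing the difference of the heads by parts against
`(e((t - s) n^k) - 1) / n^k = O(|t - s|)` gives `O(|t - s| N^σ)`; both are `O(|t - s|^{1 - σ/k})`.
At scale `1/m` the graph of an `α`-Hölder function on `[0,1]` is covered by `O(m^{2-α})` balls of
radius `1/m`, so its Hausdorff dimension is at most `2 - α = 1 + σ/k`; then let `ε → 0`.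
The functions `‖F‖`, `Re F`, `Im F` inherit the Hölder bound since they are `1`-Lipschitz in `F`.
-/

open Filter Finset Topology
open scoped ENNReal

lemma rpow_sub_one_le_sub_div {p x : ℝ} (hx : 0 ≤ x) (hpx : 0 < x ∨ 0 < p) (hp0 : p ≠ 0)
    (hp : p ≤ 1) : (x + 1) ^ (p - 1) ≤ ((x + 1) ^ p - x ^ p) / p := by
  obtain ⟨c, hc, hslope⟩ := exists_hasDerivAt_eq_slope (fun y : ℝ => y ^ p)
    (fun y => p * y ^ (p - 1)) (lt_add_one x)
    (fun y hy => (Real.continuousAt_rpow_const y p <|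
      hpx.imp (fun h : 0 < x => (h.trans_le hy.1).ne') le_of_lt).continuousWithinAt)
    (fun y hy => Real.hasDerivAt_rpow_const (Or.inl (hx.trans_lt hy.1).ne'))
  rw [add_sub_cancel_left, div_one] at hslope
  rw [← hslope, mul_div_cancel_left₀ _ hp0]
  exact Real.rpow_le_rpow_of_nonpos (hx.trans_lt hc.1) hc.2.le (by linarith)

lemma sum_Ioc_rpow_sub_one_le {p : ℝ} (hp0 : p ≠ 0) (hp : p ≤ 1) {N M : ℕ} (hNM : N ≤ M)
    (hN : 0 < N ∨ 0 < p) :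
    ∑ n ∈ Ioc N M, (n : ℝ) ^ (p - 1) ≤ ((M : ℝ) ^ p - (N : ℝ) ^ p) / p := by
  induction M, hNM using Nat.le_induction with
  | base => simp
  | succ m hm ih =>
    have hstep := rpow_sub_one_le_sub_div (m.cast_nonneg : (0 : ℝ) ≤ m)
      (hN.imp_left fun h => by exact_mod_cast h.trans_le hm) hp0 hp
    rw [sum_Ioc_succ_top (by omega), Nat.cast_succ]
    calc _ ≤ ((m : ℝ) ^ p - (N : ℝ) ^ p) / p + (((m : ℝ) + 1) ^ p - (m : ℝ) ^ p) / p :=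
          add_le_add ih hstep
      _ = _ := by ring

lemma sum_Ioc_zero_rpow_sub_one_le {p : ℝ} (hp0 : 0 < p) (hp : p ≤ 1) (N : ℕ) :
    ∑ n ∈ Ioc 0 N, (n : ℝ) ^ (p - 1) ≤ (N : ℝ) ^ p / p := by
  simpa [Real.zero_rpow hp0.ne'] using
    sum_Ioc_rpow_sub_one_le hp0.ne' hp (Nat.zero_le N) (Or.inr hp0)

lemma sum_Ioc_rpow_sub_one_le_of_neg {p : ℝ} (hp : p < 0) {N M : ℕ} (hN : 0 < N) (hNM : N ≤ M) :
    ∑ n ∈ Ioc N M, (n : ℝ) ^ (p - 1) ≤ (N : ℝ) ^ p / -p := by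
  refine (sum_Ioc_rpow_sub_one_le hp.ne (by linarith) hNM (Or.inl hN)).trans ?_
  rw [← neg_div_neg_eq, neg_sub]
  gcongr
  · linarith
  · exact sub_le_self _ (by positivity)

lemma add_one_pow_sub_pow_div_le {x : ℝ} (hx : 0 ≤ x) (k : ℕ) :
    ((x + 1) ^ k - x ^ k) / (x + 1) ^ k ≤ k / (x + 1) := by
  have hx1 : 0 < x + 1 := by linarith
  have hbern := one_add_mul_le_pow (a := -(x + 1)⁻¹)
    (by linarith [inv_le_one_of_one_le₀ (by linarith : (1 : ℝ) ≤ x + 1)]) k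
  have hbase : 1 + -(x + 1)⁻¹ = x / (x + 1) := by field_simp; ring
  rw [hbase, div_pow] at hbern
  rw [sub_div, div_self (by positivity)]
  rw [div_eq_mul_inv (k : ℝ)]
  linarith

lemma norm_exp_mul_I_sub_exp_mul_I_le (x y : ℝ) :
    ‖Complex.exp (x * Complex.I) - Complex.exp (y * Complex.I)‖ ≤ |x - y| := by
  have hfactor : Complex.exp (x * Complex.I) - Complex.exp (y * Complex.I)
      = Complex.exp (y * Complex.I) * (Complex.exp (Complex.I * ↑(x - y)) - 1) := by
    rw [mul_sub, ← Complex.exp_add]; push_cast; ring_nf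
  rw [hfactor, norm_mul, Complex.norm_exp_ofReal_mul_I, one_mul]
  exact Real.norm_exp_I_mul_ofReal_sub_one_le

lemma norm_exp_mul_I_sub_one_le (x : ℝ) : ‖Complex.exp (x * Complex.I) - 1‖ ≤ |x| := by
  simpa using norm_exp_mul_I_sub_exp_mul_I_le x 0

lemma norm_exp_sub_one_div_sub_le (b : ℝ) {u v : ℝ} (hu : 0 < u) (huv : u ≤ v) :
    ‖(Complex.exp (↑(b * u) * Complex.I) - 1) / u
        - (Complex.exp (↑(b * v) * Complex.I) - 1) / v‖ ≤ 2 * |b| * ((v - u) / v) := by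
  have hv : 0 < v := hu.trans_le huv
  have hsplit : (Complex.exp (↑(b * u) * Complex.I) - 1) / u
        - (Complex.exp (↑(b * v) * Complex.I) - 1) / v
      = (Complex.exp (↑(b * u) * Complex.I) - 1) * ↑((v - u) / (u * v))
        + (Complex.exp (↑(b * u) * Complex.I) - Complex.exp (↑(b * v) * Complex.I)) / v := by
    have : (u : ℂ) ≠ 0 := by exact_mod_cast hu.ne'
    have : (v : ℂ) ≠ 0 := by exact_mod_cast hv.ne'
    push_cast; field_simp; ring
  have hfirst : ‖Complex.exp (↑(b * u) * Complex.I) - 1‖ ≤ |b| * u := by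
    simpa [abs_mul, abs_of_pos hu] using norm_exp_mul_I_sub_one_le (b * u)
  have hsecond : ‖Complex.exp (↑(b * u) * Complex.I) - Complex.exp (↑(b * v) * Complex.I)‖
      ≤ |b| * (v - u) := by
    simpa [← mul_sub, abs_mul, abs_of_nonpos (sub_nonpos.2 huv)] using
      norm_exp_mul_I_sub_exp_mul_I_le (b * u) (b * v)
  have hvu : 0 ≤ (v - u) / (u * v) := by apply div_nonneg <;> nlinarith
  rw [hsplit]
  refine (norm_add_le _ _).trans ?_
  rw [norm_mul, norm_div, Complex.norm_real, Complex.norm_real, Real.norm_of_nonneg hvu,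
    Real.norm_of_nonneg hv.le]
  calc _ ≤ |b| * u * ((v - u) / (u * v)) + |b| * (v - u) / v := by gcongr
    _ = 2 * |b| * ((v - u) / v) := by field_simp; ring

lemma sum_Ioc_mul_eq_by_parts {R : Type*} [CommRing R] (c w : ℕ → R) {N M : ℕ} (hNM : N ≤ M) :
    ∑ n ∈ Ioc N M, c n * w n
      = (∑ j ∈ Ioc 0 M, c j) * w (M + 1) - (∑ j ∈ Ioc 0 N, c j) * w (N + 1)
        + ∑ n ∈ Ioc N M, (∑ j ∈ Ioc 0 n, c j) * (w n - w (n + 1)) := by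
  induction M, hNM using Nat.le_induction with
  | base => simp
  | succ m hm ih =>
    rw [sum_Ioc_succ_top (by omega), sum_Ioc_succ_top hm, sum_Ioc_succ_top (Nat.zero_le m), ih]
    ring

lemma norm_sum_Ioc_mul_le {R : Type*} [NormedCommRing R] (c w : ℕ → R) {N M : ℕ}
    (hNM : N ≤ M) :
    ‖∑ n ∈ Ioc N M, c n * w n‖
      ≤ ‖∑ j ∈ Ioc 0 M, c j‖ * ‖w (M + 1)‖ + ‖∑ j ∈ Ioc 0 N, c j‖ * ‖w (N + 1)‖
        + ∑ n ∈ Ioc N M, ‖∑ j ∈ Ioc 0 n, c j‖ * ‖w n - w (n + 1)‖ := by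
  rw [sum_Ioc_mul_eq_by_parts c w hNM]
  refine (norm_add_le _ _).trans (add_le_add ?_ ((norm_sum_le _ _).trans ?_))
  · exact (norm_sub_le _ _).trans (add_le_add (norm_mul_le _ _) (norm_mul_le _ _))
  · exact sum_le_sum fun n _ => norm_mul_le _ _

lemma rpow_mul_inv_pow {x : ℝ} (hx : 0 < x) (σ : ℝ) (k : ℕ) :
    x ^ σ * (x ^ k)⁻¹ = x ^ (σ - k) := by
  rw [Real.rpow_sub_natCast hx.ne', div_eq_mul_inv]

lemma inv_pow_sub_inv_add_one_pow_le {x : ℝ} (hx : 0 < x) (k : ℕ) :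
    (x ^ k)⁻¹ - ((x + 1) ^ k)⁻¹ ≤ k / x * (x ^ k)⁻¹ := by
  have hdiff : (x ^ k)⁻¹ - ((x + 1) ^ k)⁻¹ = ((x + 1) ^ k - x ^ k) / (x + 1) ^ k * (x ^ k)⁻¹ := by
    field_simp
  rw [hdiff]
  refine mul_le_mul_of_nonneg_right ((add_one_pow_sub_pow_div_le hx.le k).trans ?_) (by positivity)
  gcongr
  linarith

lemma norm_sum_Ioc_div_pow_le {c : ℕ → ℂ} {C σ : ℝ} {k : ℕ} (hσk : σ < k) (hC : 0 ≤ C)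
    (hS : ∀ n : ℕ, ‖∑ j ∈ Ioc 0 n, c j‖ ≤ C * (n : ℝ) ^ σ) {N M : ℕ} (hN : 0 < N)
    (hNM : N ≤ M) :
    ‖∑ n ∈ Ioc N M, c n / (n : ℂ) ^ k‖ ≤ C * (2 + k / (k - σ)) * (N : ℝ) ^ (σ - k) := by
  set w : ℕ → ℂ := fun n => (((n : ℝ) ^ k)⁻¹ : ℝ)
  have hdiv : ∀ n, c n / (n : ℂ) ^ k = c n * w n := fun n => by
    simp only [w]; push_cast; rw [div_eq_mul_inv]
  have hN' : (0 : ℝ) < N := by exact_mod_cast hN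
  have hboundary : ∀ m, N ≤ m → ‖∑ j ∈ Ioc 0 m, c j‖ * ‖w (m + 1)‖ ≤ C * (N : ℝ) ^ (σ - k) := by
    intro m hm
    have hm' : (0 : ℝ) < m := hN'.trans_le (by exact_mod_cast hm)
    have hw : ‖w (m + 1)‖ ≤ ((m : ℝ) ^ k)⁻¹ := by
      simp only [w, Complex.norm_real, Real.norm_eq_abs, Nat.cast_succ]
      rw [abs_of_nonneg (by positivity)]
      gcongr
      linarith
    calc _ ≤ C * (m : ℝ) ^ σ * ((m : ℝ) ^ k)⁻¹ := by gcongr; exact hS m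
      _ = C * (m : ℝ) ^ (σ - k) := by rw [mul_assoc, rpow_mul_inv_pow hm']
      _ ≤ C * (N : ℝ) ^ (σ - k) := mul_le_mul_of_nonneg_left
          (Real.rpow_le_rpow_of_nonpos hN' (Nat.cast_le.2 hm) (by linarith)) hC
  have hstep : ∀ n ∈ Ioc N M, ‖∑ j ∈ Ioc 0 n, c j‖ * ‖w n - w (n + 1)‖
      ≤ C * k * (n : ℝ) ^ ((σ - k) - 1) := by
    intro n hn
    have hn' : (0 : ℝ) < n := hN'.trans_le (by exact_mod_cast (mem_Ioc.1 hn).1.le)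
    have hw : ‖w n - w (n + 1)‖ ≤ k / n * ((n : ℝ) ^ k)⁻¹ := by
      have hnonneg : 0 ≤ ((n : ℝ) ^ k)⁻¹ - (((n : ℝ) + 1) ^ k)⁻¹ := by
        rw [sub_nonneg]; gcongr; linarith
      simp only [w, Nat.cast_succ, ← Complex.ofReal_sub, Complex.norm_real,
        Real.norm_of_nonneg hnonneg]
      exact inv_pow_sub_inv_add_one_pow_le hn' k
    calc _ ≤ C * (n : ℝ) ^ σ * (k / n * ((n : ℝ) ^ k)⁻¹) := by gcongr; exact hS n
      _ = C * k * ((n : ℝ) ^ σ * ((n : ℝ) ^ k)⁻¹ / n) := by ring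
      _ = C * k * (n : ℝ) ^ ((σ - k) - 1) := by
          rw [rpow_mul_inv_pow hn', Real.rpow_sub_one hn'.ne']
  have hsum := sum_Ioc_rpow_sub_one_le_of_neg (p := σ - k) (by linarith) hN hNM
  rw [neg_sub] at hsum
  simp_rw [hdiv]
  calc _ ≤ C * (N : ℝ) ^ (σ - k) + C * (N : ℝ) ^ (σ - k)
        + ∑ n ∈ Ioc N M, C * k * (n : ℝ) ^ ((σ - k) - 1) :=
        (norm_sum_Ioc_mul_le _ _ hNM).trans
          (add_le_add (add_le_add (hboundary M hNM) (hboundary N le_rfl)) (sum_le_sum hstep))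
    _ ≤ C * (N : ℝ) ^ (σ - k) + C * (N : ℝ) ^ (σ - k)
        + C * k * ((N : ℝ) ^ (σ - k) / (k - σ)) := by
        rw [← mul_sum]; gcongr
    _ = C * (2 + k / (k - σ)) * (N : ℝ) ^ (σ - k) := by ring

lemma norm_sum_mul_exp_sub_one_div_le {c : ℕ → ℂ} {C σ : ℝ} (hσ : 0 < σ) (hσ1 : σ ≤ 1)
    (hC : 0 ≤ C) (hS : ∀ n : ℕ, ‖∑ j ∈ Ioc 0 n, c j‖ ≤ C * (n : ℝ) ^ σ) (k : ℕ) (b : ℝ)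
    (N : ℕ) :
    ‖∑ n ∈ Ioc 0 N, c n * ((Complex.exp (↑(b * (n : ℝ) ^ k) * Complex.I) - 1) / ↑((n : ℝ) ^ k))‖
      ≤ C * (1 + 2 * k / σ) * |b| * (N : ℝ) ^ σ := by
  set W : ℕ → ℂ := fun n => (Complex.exp (↑(b * (n : ℝ) ^ k) * Complex.I) - 1) / ↑((n : ℝ) ^ k)
  have hW : ‖W (N + 1)‖ ≤ |b| := by
    have hpos : (0 : ℝ) < ((N + 1 : ℕ) : ℝ) ^ k := by positivity
    simp only [W, norm_div, Complex.norm_real, Real.norm_of_nonneg hpos.le]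
    rw [div_le_iff₀ hpos]
    have h := norm_exp_mul_I_sub_one_le (b * ((N + 1 : ℕ) : ℝ) ^ k)
    rwa [abs_mul, abs_of_pos hpos] at h
  have hstep : ∀ n ∈ Ioc 0 N, ‖∑ j ∈ Ioc 0 n, c j‖ * ‖W n - W (n + 1)‖
      ≤ 2 * k * C * |b| * (n : ℝ) ^ (σ - 1) := by
    intro n hn
    have hn' : (0 : ℝ) < n := by exact_mod_cast (mem_Ioc.1 hn).1
    have hdiff : ‖W n - W (n + 1)‖ ≤ 2 * |b| * (k / n) := by
      have := norm_exp_sub_one_div_sub_le b (by positivity : (0 : ℝ) < (n : ℝ) ^ k)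
        (pow_le_pow_left₀ hn'.le (le_add_of_nonneg_right zero_le_one) k)
      simp only [W]
      push_cast at this ⊢
      refine this.trans (mul_le_mul_of_nonneg_left ?_ (by positivity))
      calc _ ≤ (k : ℝ) / (n + 1) := add_one_pow_sub_pow_div_le hn'.le k
        _ ≤ k / n := by gcongr; linarith
    calc _ ≤ C * (n : ℝ) ^ σ * (2 * |b| * (k / n)) := by gcongr; exact hS n
      _ = 2 * k * C * |b| * ((n : ℝ) ^ σ / n) := by ring
      _ = 2 * k * C * |b| * (n : ℝ) ^ (σ - 1) := by rw [Real.rpow_sub_one hn'.ne']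
  have hsum := sum_Ioc_zero_rpow_sub_one_le hσ hσ1 N
  calc _ ≤ C * (N : ℝ) ^ σ * |b| + 0 + ∑ n ∈ Ioc 0 N, 2 * k * C * |b| * (n : ℝ) ^ (σ - 1) :=
        (norm_sum_Ioc_mul_le _ _ (Nat.zero_le N)).trans
          (add_le_add (add_le_add (by gcongr; exact hS N) (by simp)) (sum_le_sum hstep))
    _ ≤ C * (N : ℝ) ^ σ * |b| + 0 + 2 * k * C * |b| * ((N : ℝ) ^ σ / σ) := by
        rw [← mul_sum]; gcongr
    _ = C * (1 + 2 * k / σ) * |b| * (N : ℝ) ^ σ := by field_simp; ring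

lemma norm_sub_sum_Ioc_le_of_tendsto {c : ℕ → ℂ} {L : ℂ}
    (hc : Tendsto (fun M => ∑ n ∈ Ioc 0 M, c n) atTop (𝓝 L)) {N : ℕ} {B : ℝ}
    (hB : ∀ M, N ≤ M → ‖∑ n ∈ Ioc N M, c n‖ ≤ B) : ‖L - ∑ n ∈ Ioc 0 N, c n‖ ≤ B := by
  refine le_of_tendsto (hc.sub_const _).norm ?_
  filter_upwards [eventually_ge_atTop N] with M hM
  rw [← sum_Ioc_consecutive c (Nat.zero_le N) hM, add_sub_cancel_left]
  exact hB M hM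

-- Written exactly as the summands in `stmt_18`, whose hypotheses then apply definitionally.
noncomputable def twistedTerm (a : ℕ → ℂ) (k : ℕ) (t : ℝ) (n : ℕ) : ℂ :=
  a n * Complex.exp (2 * Real.pi * Complex.I * ((n : ℂ) ^ k) * (t : ℂ))

lemma twistedTerm_div_sub (a : ℕ → ℂ) (k : ℕ) (t s : ℝ) (n : ℕ) :
    twistedTerm a k t n / (n : ℂ) ^ k - twistedTerm a k s n / (n : ℂ) ^ k
      = twistedTerm a k s n * ((Complex.exp (↑(2 * Real.pi * (t - s) * (n : ℝ) ^ k) * Complex.I)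
          - 1) / ↑((n : ℝ) ^ k)) := by
  have hexp : Complex.exp (2 * Real.pi * Complex.I * ((n : ℂ) ^ k) * (t : ℂ))
      = Complex.exp (2 * Real.pi * Complex.I * ((n : ℂ) ^ k) * (s : ℂ))
        * Complex.exp (↑(2 * Real.pi * (t - s) * (n : ℝ) ^ k) * Complex.I) := by
    rw [← Complex.exp_add]; push_cast; ring_nf
  simp only [twistedTerm, hexp]
  push_cast
  ring

/-- The cutoff `N = ⌈h^{-1/k}⌉` balancing the tail `N^{σ-k}` against the head `h N^σ`. -/
lemma exists_cutoff {k : ℕ} (hk : 0 < k) {σ h : ℝ} (hσ : 0 ≤ σ) (hσ1 : σ ≤ 1) (h0 : 0 < h)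
    (h1 : h ≤ 1) :
    ∃ N : ℕ, 0 < N ∧ (N : ℝ) ^ (σ - k) ≤ h ^ (1 - σ / k) ∧ h * (N : ℝ) ^ σ ≤ 2 * h ^ (1 - σ / k) := by
  have hk' : (1 : ℝ) ≤ k := by exact_mod_cast hk
  set R := h ^ (-1 / (k : ℝ))
  have hR : 1 ≤ R := Real.one_le_rpow_of_pos_of_le_one_of_nonpos h0 h1
    (div_nonpos_of_nonpos_of_nonneg (by norm_num) (by positivity))
  have hRpow : ∀ p : ℝ, R ^ p = h ^ (-p / k) := fun p => by
    rw [← Real.rpow_mul h0.le]; ring_nf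
  refine ⟨⌈R⌉₊, Nat.ceil_pos.2 (by linarith), ?_, ?_⟩
  · calc (⌈R⌉₊ : ℝ) ^ (σ - k) ≤ R ^ (σ - k) :=
          Real.rpow_le_rpow_of_nonpos (by linarith) (Nat.le_ceil R) (by linarith)
      _ = h ^ (1 - σ / k) := by rw [hRpow]; congr 1; field_simp; ring
  · have hceil : (⌈R⌉₊ : ℝ) ≤ 2 * R := by linarith [Nat.ceil_lt_add_one (by linarith : 0 ≤ R)]
    have htwo : (2 : ℝ) ^ σ ≤ 2 := by
      simpa using Real.rpow_le_rpow_of_exponent_le one_le_two hσ1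
    calc h * (⌈R⌉₊ : ℝ) ^ σ ≤ h * (2 ^ σ * R ^ σ) := by
          rw [← Real.mul_rpow zero_le_two (by linarith)]; gcongr
      _ ≤ h * (2 * R ^ σ) := by gcongr
      _ = 2 * (h * h ^ (-σ / k)) := by rw [hRpow]; ring
      _ = 2 * h ^ (1 - σ / k) := by rw [sub_eq_add_neg, Real.rpow_add h0, Real.rpow_one, neg_div]

theorem exists_norm_sub_le_mul_rpow {a : ℕ → ℂ} {k : ℕ} (hk : 0 < k) {C σ : ℝ} (hσ : 0 < σ)
    (hσ1 : σ ≤ 1) (hσk : σ < k) (hC : 0 ≤ C)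
    (hS : ∀ t n, ‖∑ j ∈ Ioc 0 n, twistedTerm a k t j‖ ≤ C * (n : ℝ) ^ σ) {F : ℝ → ℂ}
    (hF : ∀ t, Tendsto (fun N => ∑ n ∈ Ioc 0 N, twistedTerm a k t n / (n : ℂ) ^ k) atTop
      (𝓝 (F t))) :
    ∃ K, ∀ t s, |t - s| ≤ 1 → ‖F t - F s‖ ≤ K * |t - s| ^ (1 - σ / k) := by
  set D₁ := C * (2 + k / (k - σ))
  set D₂ := 2 * Real.pi * C * (1 + 2 * k / σ)
  have hα : 0 < 1 - σ / k := by rw [sub_pos, div_lt_one (by positivity)]; linarith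
  refine ⟨2 * D₁ + 2 * D₂, fun t s hts => ?_⟩
  rcases (abs_nonneg (t - s)).eq_or_lt with hts0 | hts0
  · obtain rfl : t = s := sub_eq_zero.1 (abs_eq_zero.1 hts0.symm)
    simp [Real.zero_rpow hα.ne']
  obtain ⟨N, hN, htail, hhead⟩ := exists_cutoff hk hσ.le hσ1 hts0 hts
  set P := fun u => ∑ n ∈ Ioc 0 N, twistedTerm a k u n / (n : ℂ) ^ k
  have hrem : ∀ u, ‖F u - P u‖ ≤ D₁ * (N : ℝ) ^ (σ - k) := fun u =>
    norm_sub_sum_Ioc_le_of_tendsto (hF u) fun M hM =>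
      norm_sum_Ioc_div_pow_le hσk hC (hS u) hN hM
  have hdiff : ‖P t - P s‖ ≤ D₂ * |t - s| * (N : ℝ) ^ σ := by
    have := norm_sum_mul_exp_sub_one_div_le hσ hσ1 hC (hS s) k (2 * Real.pi * (t - s)) N
    rw [abs_mul, abs_of_pos (by positivity : 0 < 2 * Real.pi)] at this
    simp only [P, ← sum_sub_distrib, twistedTerm_div_sub]
    linarith
  calc ‖F t - F s‖ = ‖(F t - P t) + (P t - P s) - (F s - P s)‖ := by congr 1; ring
    _ ≤ ‖F t - P t‖ + ‖P t - P s‖ + ‖F s - P s‖ := norm_sub_le_of_le (norm_add_le _ _) le_rfl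
    _ ≤ D₁ * (N : ℝ) ^ (σ - k) + D₂ * |t - s| * (N : ℝ) ^ σ + D₁ * (N : ℝ) ^ (σ - k) := by
        gcongr <;> apply hrem
    _ ≤ D₁ * |t - s| ^ (1 - σ / k) + D₂ * (2 * |t - s| ^ (1 - σ / k))
        + D₁ * |t - s| ^ (1 - σ / k) := by
        rw [mul_assoc D₂]
        gcongr
    _ = (2 * D₁ + 2 * D₂) * |t - s| ^ (1 - σ / k) := by ring

lemma dimH_le_of_forall_cover {X : Type*} [MetricSpace X] {s : Set X} {d A : ℝ} (hd : 0 ≤ d)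
    {ι : ℕ → Type*} [∀ m, Fintype (ι m)] (x : ∀ m, ι m → X)
    (hcard : ∀ m : ℕ, 0 < m → (Fintype.card (ι m) : ℝ) ≤ A * (m : ℝ) ^ d)
    (hcover : ∀ m : ℕ, 0 < m → s ⊆ ⋃ i, Metric.closedBall (x m i) (1 / m)) :
    dimH s ≤ ENNReal.ofReal d := by
  borelize X
  have hball : ∀ (m : ℕ) i, Metric.ediam (Metric.closedBall (x m i) (1 / m))
      ≤ ENNReal.ofReal (2 / m) := fun m i => by
    rw [← Metric.closedEBall_ofReal (by positivity)]
    refine Metric.ediam_closedEBall_le.trans_eq ?_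
    rw [← ENNReal.ofReal_ofNat 2, ← ENNReal.ofReal_mul zero_le_two]; ring_nf
  have hsum : ∀ m : ℕ, 0 < m → ∑ i, Metric.ediam (Metric.closedBall (x m i) (1 / m)) ^ d
      ≤ ENNReal.ofReal (A * 2 ^ d) := fun m hm => by
    have hm' : (0 : ℝ) < m := by exact_mod_cast hm
    calc _ ≤ ∑ _i : ι m, ENNReal.ofReal (2 / m) ^ d :=
          sum_le_sum fun i _ => ENNReal.rpow_le_rpow (hball m i) hd
      _ = ENNReal.ofReal (Fintype.card (ι m) * (2 / m) ^ d) := by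
          rw [sum_const, nsmul_eq_mul, ENNReal.ofReal_rpow_of_nonneg (by positivity) hd,
            ENNReal.ofReal_mul (by positivity), ENNReal.ofReal_natCast, card_univ]
      _ ≤ ENNReal.ofReal (A * (m : ℝ) ^ d * (2 / m) ^ d) := by
          gcongr; exact hcard m hm
      _ = ENNReal.ofReal (A * 2 ^ d) := by
          rw [Real.div_rpow zero_le_two hm'.le, mul_assoc, mul_div_cancel₀ _ (by positivity)]
  have hμ := MeasureTheory.Measure.hausdorffMeasure_le_liminf_sum d s
    (fun m : ℕ => ENNReal.ofReal (2 / m))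
    (by simpa using ENNReal.tendsto_ofReal (tendsto_const_div_atTop_nhds_zero_nat 2))
    (fun m i => Metric.closedBall (x m i) (1 / m)) (Eventually.of_forall hball)
    ((eventually_gt_atTop 0).mono hcover)
  rw [show ENNReal.ofReal d = (d.toNNReal : ℝ≥0∞) from rfl]
  refine dimH_le_of_hausdorffMeasure_ne_top (ne_top_of_le_ne_top (ENNReal.ofReal_ne_top (r := A * 2 ^ d)) ?_)
  rw [Real.coe_toNNReal _ hd]
  exact hμ.trans (liminf_le_of_frequently_le' ((eventually_gt_atTop 0).mono hsum).frequently)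

lemma sub_floor_mul_div_mem_Icc {x m : ℝ} (hx : 0 ≤ x) (hm : 0 < m) :
    x - ⌊x * m⌋₊ / m ∈ Set.Icc 0 (1 / m) := by
  have h1 : (⌊x * m⌋₊ : ℝ) / m ≤ x := by
    rw [div_le_iff₀ hm]; exact Nat.floor_le (mul_nonneg hx hm.le)
  have h2 : x ≤ (⌊x * m⌋₊ + 1) / m := by
    rw [le_div_iff₀ hm]; exact (Nat.lt_floor_add_one (x * m)).le
  rw [add_div] at h2
  constructor <;> linarith

lemma exists_grid_point_dist_le {f : ℝ → ℝ} {K α : ℝ} (hα0 : 0 ≤ α) (hK : 0 ≤ K)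
    (hf : ∀ t ∈ Set.Icc (0 : ℝ) 1, ∀ s ∈ Set.Icc (0 : ℝ) 1, |f t - f s| ≤ K * |t - s| ^ α)
    {m : ℕ} (hm : 0 < m) {t : ℝ} (ht : t ∈ Set.Icc (0 : ℝ) 1) :
    ∃ j < m + 1, ∃ i < ⌊2 * K * (m : ℝ) ^ (1 - α)⌋₊ + 1,
      dist (t, f t) ((j : ℝ) / m, f (j / m) - K * (m : ℝ) ^ (-α) + i / m) ≤ 1 / m := by
  have hm' : (0 : ℝ) < m := by exact_mod_cast hm
  set j := ⌊t * m⌋₊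
  have hj : j < m + 1 := by
    refine Nat.lt_succ_of_le ((Nat.floor_le_floor (mul_le_of_le_one_left hm'.le ht.2)).trans ?_)
    rw [Nat.floor_natCast]
  have htj : t - j / m ∈ Set.Icc (0 : ℝ) (1 / m) := sub_floor_mul_div_mem_Icc ht.1 hm'
  have hjI : (j : ℝ) / m ∈ Set.Icc (0 : ℝ) 1 := ⟨by positivity, by linarith [htj.1, ht.2]⟩
  have hfj : |f t - f (j / m)| ≤ K * (m : ℝ) ^ (-α) := by
    refine (hf t ht _ hjI).trans (mul_le_mul_of_nonneg_left ?_ hK)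
    rw [Real.rpow_neg hm'.le, ← Real.inv_rpow hm'.le, ← one_div]
    exact Real.rpow_le_rpow (abs_nonneg _) ((abs_of_nonneg htj.1).trans_le htj.2) hα0
  set y := f (j / m) - K * (m : ℝ) ^ (-α)
  have hy : f t - y ∈ Set.Icc 0 (2 * K * (m : ℝ) ^ (-α)) := by
    constructor <;> linarith [abs_le.1 hfj]
  have hyi := sub_floor_mul_div_mem_Icc hy.1 hm'
  refine ⟨j, hj, ⌊(f t - y) * m⌋₊, Nat.lt_succ_of_le (Nat.floor_le_floor ?_), ?_⟩
  · calc (f t - y) * m ≤ 2 * K * (m : ℝ) ^ (-α) * m := by gcongr; exact hy.2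
      _ = 2 * K * (m : ℝ) ^ (1 - α) := by
          rw [mul_assoc, ← Real.rpow_add_one hm'.ne']; ring_nf
  · rw [Prod.dist_eq, Real.dist_eq, Real.dist_eq, max_le_iff, ← sub_sub, abs_of_nonneg htj.1,
      abs_of_nonneg hyi.1]
    exact ⟨htj.2, hyi.2⟩

lemma dimH_graph_le_of_holder {f : ℝ → ℝ} {K α : ℝ} (hα0 : 0 ≤ α) (hα1 : α ≤ 1)
    (hf : ∀ t ∈ Set.Icc (0 : ℝ) 1, ∀ s ∈ Set.Icc (0 : ℝ) 1, |f t - f s| ≤ K * |t - s| ^ α) :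
    dimH {q : ℝ × ℝ | q.1 ∈ Set.Icc (0 : ℝ) 1 ∧ q.2 = f q.1} ≤ ENNReal.ofReal (2 - α) := by
  have hK : 0 ≤ K := by
    have := hf 1 ⟨zero_le_one, le_rfl⟩ 0 ⟨le_rfl, zero_le_one⟩
    rw [sub_zero, abs_one, Real.one_rpow, mul_one] at this
    exact (abs_nonneg _).trans this
  set P : ℕ → ℕ := fun m => ⌊2 * K * (m : ℝ) ^ (1 - α)⌋₊ + 1
  refine dimH_le_of_forall_cover (by linarith) (A := 4 * K + 2)
    (ι := fun m => Fin (m + 1) × Fin (P m))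
    (fun m ji => ((ji.1 : ℝ) / m, f (ji.1 / m) - K * (m : ℝ) ^ (-α) + (ji.2 : ℝ) / m))
    (fun m hm => ?_) (fun m hm => ?_)
  · have hm' : (1 : ℝ) ≤ m := by exact_mod_cast hm
    have hu : 1 ≤ (m : ℝ) ^ (1 - α) := Real.one_le_rpow hm' (by linarith)
    have hP : (P m : ℝ) ≤ 2 * K * (m : ℝ) ^ (1 - α) + 1 := by
      simp only [P, Nat.cast_add, Nat.cast_one]
      gcongr
      exact Nat.floor_le (by positivity)
    rw [Fintype.card_prod, Fintype.card_fin, Fintype.card_fin, Nat.cast_mul, Nat.cast_succ,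
      show (2 : ℝ) - α = 1 + (1 - α) by ring, Real.rpow_add (by linarith), Real.rpow_one]
    calc _ ≤ ((m : ℝ) + 1) * (2 * K * (m : ℝ) ^ (1 - α) + 1) := by gcongr
      _ ≤ _ := by nlinarith
  · rintro ⟨t, z⟩ ⟨ht, hz⟩
    obtain rfl : z = f t := hz
    obtain ⟨j, hj, i, hi, hdist⟩ := exists_grid_point_dist_le hα0 hK hf hm ht
    exact Set.mem_iUnion.2 ⟨(⟨j, hj⟩, ⟨i, hi⟩), hdist⟩

lemma dimH_graph_le_of_partialSum_bound {a : ℕ → ℂ} {k : ℕ} (hk : 0 < k) {C σ : ℝ}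
    (hσ : 0 < σ) (hσ1 : σ ≤ 1) (hσk : σ < k) (hC : 0 ≤ C)
    (hS : ∀ t n, ‖∑ j ∈ Ioc 0 n, twistedTerm a k t j‖ ≤ C * (n : ℝ) ^ σ) {F : ℝ → ℂ}
    (hF : ∀ t, Tendsto (fun N => ∑ n ∈ Ioc 0 N, twistedTerm a k t n / (n : ℂ) ^ k) atTop
      (𝓝 (F t)))
    {g : ℝ → ℝ} (hg : ∀ t s, |g t - g s| ≤ ‖F t - F s‖) :
    dimH {q : ℝ × ℝ | q.1 ∈ Set.Icc (0 : ℝ) 1 ∧ q.2 = g q.1} ≤ ENNReal.ofReal (1 + σ / k) := by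
  obtain ⟨K, hK⟩ := exists_norm_sub_le_mul_rpow hk hσ hσ1 hσk hC hS hF
  have hα : 0 ≤ 1 - σ / k := sub_nonneg.2 ((div_le_one (by positivity)).2 hσk.le)
  convert dimH_graph_le_of_holder hα (sub_le_self 1 (by positivity))
    (fun t ht s hs => (hg t s).trans (hK t s (abs_sub_le_iff.2 ⟨by linarith [ht.2, hs.1],
      by linarith [ht.1, hs.2]⟩))) using 2
  ring

lemma norm_sum_Ioc_le_of_floor {c : ℕ → ℂ} {C σ : ℝ} (hσ : σ ≠ 0)
    (h : ∀ x : ℝ, 1 ≤ x → ‖∑ n ∈ Icc 1 ⌊x⌋₊, c n‖ ≤ C * x ^ σ) (n : ℕ) :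
    ‖∑ j ∈ Ioc 0 n, c j‖ ≤ C * (n : ℝ) ^ σ := by
  rcases n.eq_zero_or_pos with rfl | hn
  · simp [Real.zero_rpow hσ]
  · rw [← Icc_add_one_left_eq_Ioc, zero_add]
    simpa using h n (by exact_mod_cast hn)

/-- For an integer `k ≥ 2`, assuming the (GRH-conditional) bound
`|∑_{1 ≤ n ≤ x} μ(n) e^{2πi n^k t}| ≤ C_ε x^{1 − 2^{1−2k} + ε}` for every `ε > 0`, the
Hausdorff dimensions of the graphs of `|F_{k,k}(μ;·)|`, `Re F_{k,k}(μ;·)`,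
`Im F_{k,k}(μ;·)` over `[0,1]` are each at most `1 + (1 − 2^{1−2k})/k`. -/
theorem stmt_18 (k : ℕ) (hk : 2 ≤ k)
    (hS : ∀ ε : ℝ, 0 < ε → ∃ Cε : ℝ, 0 < Cε ∧ ∀ x : ℝ, 1 ≤ x → ∀ t : ℝ,
      ‖∑ n ∈ Finset.Icc 1 ⌊x⌋₊,
        (ArithmeticFunction.moebius n : ℂ) *
          Complex.exp (2 * Real.pi * Complex.I * ((n : ℂ) ^ k) * (t : ℂ))‖
        ≤ Cε * x ^ (1 - (2 : ℝ) ^ (1 - 2 * (k : ℝ)) + ε))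
    (F : ℝ → ℂ)
    (hF : ∀ t : ℝ, Tendsto (fun N : ℕ => ∑ n ∈ Finset.Icc 1 N,
        (ArithmeticFunction.moebius n : ℂ) *
          Complex.exp (2 * Real.pi * Complex.I * ((n : ℂ) ^ k) * (t : ℂ)) / ((n : ℂ) ^ k))
      atTop (𝓝 (F t))) :
    dimH {q : ℝ × ℝ | q.1 ∈ Set.Icc (0 : ℝ) 1 ∧ q.2 = ‖F q.1‖}
        ≤ ENNReal.ofReal (1 + (1 - (2 : ℝ) ^ (1 - 2 * (k : ℝ))) / k) ∧
    dimH {q : ℝ × ℝ | q.1 ∈ Set.Icc (0 : ℝ) 1 ∧ q.2 = (F q.1).re}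
        ≤ ENNReal.ofReal (1 + (1 - (2 : ℝ) ^ (1 - 2 * (k : ℝ))) / k) ∧
    dimH {q : ℝ × ℝ | q.1 ∈ Set.Icc (0 : ℝ) 1 ∧ q.2 = (F q.1).im}
        ≤ ENNReal.ofReal (1 + (1 - (2 : ℝ) ^ (1 - 2 * (k : ℝ))) / k) := by
  have hk' : (2 : ℝ) ≤ k := by exact_mod_cast hk
  set θ : ℝ := (2 : ℝ) ^ (1 - 2 * (k : ℝ))
  have hθ : 0 < θ := by positivity
  have hθ1 : θ < 1 := Real.rpow_lt_one_of_one_lt_of_neg one_lt_two (by linarith)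
  have hIcc : ∀ N : ℕ, Icc 1 N = Ioc 0 N := fun N => Icc_add_one_left_eq_Ioc 0 N
  simp only [hIcc] at hF
  have hgraph : ∀ g : ℝ → ℝ, (∀ t s, |g t - g s| ≤ ‖F t - F s‖) →
      dimH {q : ℝ × ℝ | q.1 ∈ Set.Icc (0 : ℝ) 1 ∧ q.2 = g q.1}
        ≤ ENNReal.ofReal (1 + (1 - θ) / k) := fun g hg => by
    refine ge_of_tendsto (x := 𝓝[>] 0) (f := fun ε => ENNReal.ofReal (1 + (1 - θ + ε) / k))
      (((ENNReal.continuous_ofReal.comp (by fun_prop)).tendsto' 0 _ (by simp)).mono_left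
        nhdsWithin_le_nhds) ?_
    filter_upwards [Ioo_mem_nhdsGT hθ] with ε hε
    obtain ⟨C, hC, hCε⟩ := hS ε hε.1
    exact dimH_graph_le_of_partialSum_bound (by omega) (by linarith [hε.1]) (by linarith [hε.2])
      (by linarith [hε.2]) hC.le
      (fun t => norm_sum_Ioc_le_of_floor (by linarith [hε.1]) fun x hx => hCε x hx t) hF hg
  exact ⟨hgraph _ fun t s => abs_norm_sub_norm_le _ _,
    hgraph _ fun t s => by simpa using Complex.abs_re_le_norm (F t - F s),
    hgraph _ fun t s => by simpa using Complex.abs_im_le_norm (F t - F s)⟩
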